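/- Consider ẋ = f_{σ(t)}(x), x(0) = x₀, with finite index set 𝒫 and locally Lipschitz f_p, f_p(0)=0. Suppose there exist C¹ functions V_p : ℝⁿ → [0,∞), class-K∞ functions α₁, α₂, and reals λ̃, λ̄, λ₀ > 0, μ > 1, M ∈ ℕ∪{0} such that: (i) α₁(‖x‖) ≤ V_p(x) ≤ α₂(‖x‖); (ii) ⟨∇V_p(x), f_p(x)⟩ ≤ −λ₀ V_p(x); (iii) V_{p₁}(x) ≤ μ V_{p₂}(x); (iv) P(N_σ(t) = k) ≤ e^{−λ̃t}(λ̄t)^k/k! for k ≥ M; (v) μ < (λ₀ + λ̃)/λ̄. Then almost surely lim_{t→∞} x(t) = 0 (almost sure global asymptotic convergence). -/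

import Mathlib

/-!
On each inter-switch interval `t ↦ V_p (x t) * exp (λ₀ t)` is nonincreasing, and a switch
multiplies `V` by at most `μ`, so `V_{σ t} (x t) ≤ μ ^ N(t) * exp (-λ₀ t) * α₂ ‖x₀‖`.
Weighting the tail bound (iv) by `μ ^ k * exp (-θ m)` gives
`ℙ (N(m) ≥ M, μ ^ N(m) ≥ exp (θ m)) ≤ exp ((μ λ̄ - λ̃ - θ) m)`. Condition (v) leaves room for
some `θ < λ₀` making this rate negative, so by Borel–Cantelli almost surely
`μ ^ N(t) = O(exp (θ t))`, hence `α₁ ‖x t‖ = O(exp (-(λ₀ - θ) t)) → 0`.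
-/

open Real Set Filter MeasureTheory

open scoped Nat Topology

theorem apply_le_mul_exp_of_fderiv_le {E : Type*} [NormedAddCommGroup E] [NormedSpace ℝ E]
    {V : E → ℝ} {F : E → E} {x : ℝ → E} {lam a b : ℝ} (hV : Differentiable ℝ V)
    (hdecay : ∀ y, fderiv ℝ V y (F y) ≤ -lam * V y) (hx : ContinuousOn x (Icc a b))
    (hderiv : ∀ t ∈ Ioo a b, HasDerivAt x (F (x t)) t) :
    ∀ t ∈ Icc a b, V (x t) ≤ V (x a) * exp (-lam * (t - a)) := by
  set g : ℝ → ℝ := fun t => V (x t) * exp (lam * t)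
  have hg : ∀ t ∈ Ioo a b, HasDerivAt g
      (fderiv ℝ V (x t) (F (x t)) * exp (lam * t) + V (x t) * (exp (lam * t) * (lam * 1))) t :=
    fun t ht => ((hV (x t)).hasFDerivAt.comp_hasDerivAt t (hderiv t ht)).mul
      ((hasDerivAt_id' t).const_mul lam).exp
  have hanti : AntitoneOn g (Icc a b) := by
    refine antitoneOn_of_deriv_nonpos (convex_Icc a b)
      ((hV.continuous.comp_continuousOn hx).mul (by fun_prop)) ?_ ?_
    · rw [interior_Icc]
      exact fun t ht => (hg t ht).differentiableAt.differentiableWithinAt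
    · rw [interior_Icc]
      intro t ht
      rw [(hg t ht).deriv]
      nlinarith [hdecay (x t), exp_pos (lam * t)]
  intro t ht
  have hgt : V (x t) * exp (lam * t) ≤ V (x a) * exp (lam * a) :=
    hanti (left_mem_Icc.2 (ht.1.trans ht.2)) ht ht.1
  rwa [← le_div_iff₀ (exp_pos _), mul_div_assoc, ← exp_sub, ← mul_sub, ← neg_sub t, mul_neg,
    ← neg_mul] at hgt

theorem StrictMono.notMem_range_of_mem_Ioo {τ : ℕ → ℝ} (hτ : StrictMono τ) {i : ℕ} {t : ℝ}
    (ht : t ∈ Ioo (τ i) (τ (i + 1))) : t ∉ range τ := by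
  rintro ⟨j, rfl⟩
  have h₁ := hτ.lt_iff_lt.1 ht.1
  have h₂ := hτ.lt_iff_lt.1 ht.2
  omega

theorem switched_apply_le_pow_mul_exp {E P : Type*} [NormedAddCommGroup E] [NormedSpace ℝ E]
    {V : P → E → ℝ} {f : P → E → E} {lam μ : ℝ} (hV : ∀ p, Differentiable ℝ (V p))
    (hdecay : ∀ p y, fderiv ℝ (V p) y (f p y) ≤ -lam * V p y)
    (hratio : ∀ p₁ p₂ y, V p₁ y ≤ μ * V p₂ y) (hμ : 0 ≤ μ)
    {τ : ℕ → ℝ} (hτ0 : τ 0 = 0) (hτ : StrictMono τ) {s : ℝ → P}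
    (hs : ∀ i, ∀ t ∈ Ico (τ i) (τ (i + 1)), s t = s (τ i)) {x : ℝ → E} (hx : Continuous x)
    (hsol : ∀ t, 0 ≤ t → t ∉ range τ → HasDerivAt x (f (s t) (x t)) t) (i : ℕ) :
    ∀ t ∈ Icc (τ i) (τ (i + 1)), V (s (τ i)) (x t) ≤ μ ^ i * exp (-lam * t) * V (s 0) (x 0) := by
  have hmode : ∀ i, ∀ t ∈ Icc (τ i) (τ (i + 1)),
      V (s (τ i)) (x t) ≤ V (s (τ i)) (x (τ i)) * exp (-lam * (t - τ i)) := by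
    intro i
    refine apply_le_mul_exp_of_fderiv_le (hV _) (hdecay _) hx.continuousOn fun t ht => ?_
    have ht0 : 0 ≤ t := hτ0 ▸ (hτ.monotone i.zero_le).trans ht.1.le
    rw [← hs i t (Ioo_subset_Ico_self ht)]
    exact hsol t ht0 (hτ.notMem_range_of_mem_Ioo ht)
  induction i with
  | zero => simpa [hτ0, mul_comm] using hmode 0
  | succ i ih =>
    intro t ht
    have hprev := ih (τ (i + 1)) ⟨(hτ (Nat.lt_succ_self i)).le, le_rfl⟩
    calc V (s (τ (i + 1))) (x t)
        ≤ V (s (τ (i + 1))) (x (τ (i + 1))) * exp (-lam * (t - τ (i + 1))) := hmode (i + 1) t ht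
      _ ≤ μ * V (s (τ i)) (x (τ (i + 1))) * exp (-lam * (t - τ (i + 1))) := by
          gcongr; exact hratio _ _ _
      _ ≤ μ * (μ ^ i * exp (-lam * τ (i + 1)) * V (s 0) (x 0)) * exp (-lam * (t - τ (i + 1))) := by
          gcongr
      _ = μ ^ (i + 1) * exp (-lam * t) * V (s 0) (x 0) := by
          rw [show -lam * t = -lam * τ (i + 1) + -lam * (t - τ (i + 1)) by ring, exp_add]
          ring

theorem monotoneOn_count {τ : ℕ → ℝ} (hτ : StrictMono τ) {N : ℝ → ℕ}
    (hN : ∀ t, 0 ≤ t → τ (N t) ≤ t ∧ t < τ (N t + 1)) : MonotoneOn N (Ici 0) := by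
  intro s hs t ht hst
  by_contra! hlt
  have := hτ.monotone (Nat.succ_le_of_lt hlt)
  linarith [(hN s hs).1, (hN t ht).2]

/-- Chernoff-type bound: weighting the tail of the pmf by `μ ^ k / b ≥ 1` turns the tail sum
into an exponential series. -/
theorem measure_pow_count_ge_le {Ω : Type*} [MeasurableSpace Ω] (ν : Measure Ω) (N : Ω → ℕ)
    {M : ℕ} {a c μ b : ℝ} (hc : 0 ≤ c) (hμ : 0 ≤ μ) (hb : 0 < b)
    (hpmf : ∀ k, M ≤ k → ν {ω | N ω = k} ≤ ENNReal.ofReal (exp (-a) * c ^ k / k !)) :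
    ν {ω | M ≤ N ω ∧ b ≤ μ ^ N ω} ≤ ENNReal.ofReal (exp (μ * c - a) / b) := by
  set w : ℕ → ℝ := fun k => exp (-a) * ((μ * c) ^ k / k !) / b
  have hw : HasSum w (exp (μ * c - a) / b) := by
    have := ((NormedSpace.expSeries_div_hasSum_exp (μ * c)).mul_left (exp (-a))).div_const b
    rwa [← Real.exp_eq_exp_ℝ, ← exp_add, neg_add_eq_sub] at this
  have hpiece : ∀ k, ν {ω | (M ≤ N ω ∧ b ≤ μ ^ N ω) ∧ N ω = k} ≤ ENNReal.ofReal (w k) := by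
    intro k
    by_cases hk : M ≤ k ∧ b ≤ μ ^ k
    · refine (measure_mono fun ω hω => hω.2).trans ((hpmf k hk.1).trans ?_)
      have hck : c ^ k ≤ (μ * c) ^ k / b := by
        rw [le_div_iff₀ hb, mul_pow, mul_comm (μ ^ k)]
        exact mul_le_mul_of_nonneg_left hk.2 (by positivity)
      refine ENNReal.ofReal_le_ofReal ?_
      calc exp (-a) * c ^ k / k ! ≤ exp (-a) * ((μ * c) ^ k / b) / k ! := by gcongr
        _ = w k := by ring
    · calc ν {ω | (M ≤ N ω ∧ b ≤ μ ^ N ω) ∧ N ω = k} ≤ ν ∅ :=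
            measure_mono fun ω hω => hk (hω.2 ▸ hω.1)
        _ ≤ ENNReal.ofReal (w k) := by rw [measure_empty]; exact zero_le
  calc ν {ω | M ≤ N ω ∧ b ≤ μ ^ N ω}
      = ν (⋃ k, {ω | (M ≤ N ω ∧ b ≤ μ ^ N ω) ∧ N ω = k}) := by
        congr 1; ext ω; simp
    _ ≤ ∑' k, ENNReal.ofReal (w k) := (measure_iUnion_le _).trans (ENNReal.tsum_le_tsum hpiece)
    _ = ENNReal.ofReal (exp (μ * c - a) / b) := by
        rw [← ENNReal.ofReal_tsum_of_nonneg (fun k => by positivity) hw.summable, hw.tsum_eq]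

theorem ae_eventually_pow_count_le {Ω : Type*} [MeasurableSpace Ω] (ν : Measure Ω)
    (N : Ω → ℝ → ℕ) {M : ℕ} {a c μ θ : ℝ} (hc : 0 ≤ c) (hμ : 1 ≤ μ) (hθ : 0 ≤ θ)
    (hrate : μ * c - a < θ)
    (hpmf : ∀ t, 0 ≤ t → ∀ k, M ≤ k →
      ν {ω | N ω t = k} ≤ ENNReal.ofReal (exp (-a * t) * (c * t) ^ k / k !)) :
    ∀ᵐ ω ∂ν, ∀ᶠ m : ℕ in atTop, μ ^ N ω m ≤ μ ^ M * exp (θ * m) := by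
  set A : ℕ → Set Ω := fun m => {ω | M ≤ N ω m ∧ exp (θ * m) ≤ μ ^ N ω m}
  set r := exp (μ * c - a - θ)
  have hA : ∀ m : ℕ, ν (A m) ≤ ENNReal.ofReal r ^ m := by
    intro m
    refine (measure_pow_count_ge_le ν (N · m) (mul_nonneg hc m.cast_nonneg)
      (zero_le_one.trans hμ) (exp_pos _)
      fun k hk => by simpa only [neg_mul] using hpmf m m.cast_nonneg k hk).trans_eq ?_
    rw [← ENNReal.ofReal_pow (exp_nonneg _), ← exp_nat_mul, ← exp_sub]
    congr 2
    ring
  have hsum : ∑' m, ν (A m) ≠ ⊤ := by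
    refine ne_top_of_le_ne_top ?_ (ENNReal.tsum_le_tsum hA)
    rw [ENNReal.tsum_geometric]
    exact ENNReal.inv_ne_top.2
      (tsub_pos_of_lt (ENNReal.ofReal_lt_one.2 (exp_lt_one_iff.2 (by linarith)))).ne'
  filter_upwards [ae_eventually_notMem hsum] with ω hω
  filter_upwards [hω] with m hm
  have hμM : 1 ≤ μ ^ M := one_le_pow₀ hμ
  by_cases hM : M ≤ N ω m
  · calc μ ^ N ω m ≤ exp (θ * m) := (not_le.1 fun h => hm ⟨hM, h⟩).le
      _ ≤ μ ^ M * exp (θ * m) := le_mul_of_one_le_left (exp_nonneg _) hμM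
  · calc μ ^ N ω m ≤ μ ^ M := pow_le_pow_right₀ hμ (not_le.1 hM).le
      _ ≤ μ ^ M * exp (θ * m) :=
        le_mul_of_one_le_right (zero_le_one.trans hμM) (one_le_exp (by positivity))

theorem eventually_pow_le_of_eventually_nat {N : ℝ → ℕ} (hN : MonotoneOn N (Ici 0))
    {μ θ B : ℝ} (hμ : 1 ≤ μ) (hθ : 0 ≤ θ) (hB : 0 ≤ B)
    (h : ∀ᶠ m : ℕ in atTop, μ ^ N m ≤ B * exp (θ * m)) :
    ∀ᶠ t : ℝ in atTop, μ ^ N t ≤ B * exp θ * exp (θ * t) := by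
  filter_upwards [tendsto_nat_ceil_atTop.eventually h, eventually_ge_atTop 0] with t ht ht0
  calc μ ^ N t ≤ μ ^ N ⌈t⌉₊ :=
        pow_le_pow_right₀ hμ (hN ht0 (mem_Ici.2 (Nat.cast_nonneg _)) (Nat.le_ceil t))
    _ ≤ B * exp (θ * ⌈t⌉₊) := ht
    _ ≤ B * exp (θ * (t + 1)) := by gcongr; exact (Nat.ceil_lt_add_one ht0).le
    _ = B * exp θ * exp (θ * t) := by rw [mul_add_one, exp_add]; ring

theorem tendsto_nhds_zero_of_strictMonoOn_comp_norm_le {ι E : Type*} [SeminormedAddCommGroup E]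
    {l : Filter ι} {x : ι → E} {α : ℝ → ℝ} {g : ι → ℝ} (hα : StrictMonoOn α (Ici 0))
    (hα0 : α 0 = 0) (hle : ∀ᶠ i in l, α ‖x i‖ ≤ g i) (hg : Tendsto g l (𝓝 0)) :
    Tendsto x l (𝓝 0) := by
  refine tendsto_zero_iff_norm_tendsto_zero.2 (Metric.tendsto_nhds.2 fun ε hε => ?_)
  have hαε : 0 < α ε := hα0 ▸ hα self_mem_Ici (mem_Ici.2 hε.le) hε
  filter_upwards [hle, hg.eventually (gt_mem_nhds hαε)] with i hi hgi
  rw [Real.dist_0_eq_abs, abs_norm]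
  exact (hα.lt_iff_lt (mem_Ici.2 (norm_nonneg _)) (mem_Ici.2 hε.le)).1 (hi.trans_lt hgi)

theorem randomly_switched_as_convergence_general
    {n : ℕ} {P : Type*}
    {Ω : Type*} [MeasurableSpace Ω] (ℙ : Measure Ω)
    (f : P → EuclideanSpace ℝ (Fin n) → EuclideanSpace ℝ (Fin n))
    (V : P → EuclideanSpace ℝ (Fin n) → ℝ)
    (hVC1 : ∀ p, ContDiff ℝ 1 (V p))
    (α₁ α₂ : ℝ → ℝ)
    (hα₁mono : StrictMonoOn α₁ (Set.Ici 0))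
    (hα₁0 : α₁ 0 = 0)
    (lam₀ lamTilde lamBar μ : ℝ) (M : ℕ)
    (hlam : 0 < lam₀) (hlb : 0 < lamBar) (hμ : 1 < μ)
    -- (i) class-K∞ sandwich
    (hsandwich : ∀ p y, α₁ ‖y‖ ≤ V p y ∧ V p y ≤ α₂ ‖y‖)
    -- (ii) decay of each subsystem
    (hdecay : ∀ p y, fderiv ℝ (V p) y (f p y) ≤ -lam₀ * V p y)
    -- (iii) ratio bound
    (hratio : ∀ p₁ p₂ y, V p₁ y ≤ μ * V p₂ y)
    -- the randomly switched system and its sample-path structure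
    (σ : Ω → ℝ → P) (X : Ω → ℝ → EuclideanSpace ℝ (Fin n)) (N : Ω → ℝ → ℕ)
    (τ : Ω → ℕ → ℝ) (x₀ : EuclideanSpace ℝ (Fin n))
    (hτ0 : ∀ ω, τ ω 0 = 0) (hτmono : ∀ ω, StrictMono (τ ω))
    (hσ : ∀ ω, ∀ i : ℕ, ∀ t ∈ Set.Ico (τ ω i) (τ ω (i + 1)), σ ω t = σ ω (τ ω i))
    (hN : ∀ ω, ∀ t : ℝ, 0 ≤ t → τ ω (N ω t) ≤ t ∧ t < τ ω (N ω t + 1))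
    (hx0 : ∀ ω, X ω 0 = x₀) (hxcont : ∀ ω, Continuous (X ω))
    (hsol : ∀ ω, ∀ t : ℝ, 0 ≤ t → t ∉ Set.range (τ ω) →
      HasDerivAt (X ω) (f (σ ω t) (X ω t)) t)
    -- (iv) pmf tail bound on the switch count
    (hpmf : ∀ t : ℝ, 0 ≤ t → ∀ k : ℕ, M ≤ k →
      ℙ {ω | N ω t = k} ≤
        ENNReal.ofReal (Real.exp (-lamTilde * t) * (lamBar * t) ^ k / (Nat.factorial k)))
    -- (v) slow switching
    (hslow : μ < (lam₀ + lamTilde) / lamBar) :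
    ∀ᵐ ω ∂ℙ, Filter.Tendsto (fun t => X ω t) Filter.atTop (nhds 0) := by
  have hVnonneg : ∀ p y, 0 ≤ V p y := fun p y =>
    (hα₁0 ▸ hα₁mono.monotoneOn self_mem_Ici (norm_nonneg y) (norm_nonneg y)).trans
      (hsandwich p y).1
  obtain ⟨θ, hθmax, hθlam⟩ :=
    exists_between (max_lt (by linarith [(lt_div_iff₀ hlb).1 hslow]) hlam :
      max (μ * lamBar - lamTilde) 0 < lam₀)
  have hθ0 : 0 ≤ θ := (le_max_right _ _).trans hθmax.le
  have hgrowth := ae_eventually_pow_count_le ℙ N hlb.le hμ.le hθ0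
    ((le_max_left _ _).trans_lt hθmax) hpmf
  filter_upwards [hgrowth] with ω hω
  have hcount := eventually_pow_le_of_eventually_nat (monotoneOn_count (hτmono ω) (hN ω)) hμ.le
    hθ0 (pow_nonneg (zero_le_one.trans hμ.le) M) hω
  refine tendsto_nhds_zero_of_strictMonoOn_comp_norm_le hα₁mono hα₁0
    (g := fun t => μ ^ M * exp θ * α₂ ‖x₀‖ * exp (-(lam₀ - θ) * t)) ?_ ?_
  · filter_upwards [hcount, eventually_ge_atTop 0] with t hμN ht
    obtain ⟨hτt, htτ⟩ := hN ω t ht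
    calc α₁ ‖X ω t‖ ≤ V (σ ω t) (X ω t) := (hsandwich _ _).1
      _ ≤ μ ^ N ω t * exp (-lam₀ * t) * V (σ ω 0) x₀ := by
          rw [hσ ω _ t ⟨hτt, htτ⟩, ← hx0 ω]
          exact switched_apply_le_pow_mul_exp (fun p => (hVC1 p).differentiable one_ne_zero)
            hdecay hratio (zero_le_one.trans hμ.le) (hτ0 ω) (hτmono ω) (hσ ω) (hxcont ω)
            (hsol ω) (N ω t) t ⟨hτt, htτ.le⟩
      _ ≤ μ ^ M * exp θ * exp (θ * t) * exp (-lam₀ * t) * α₂ ‖x₀‖ := by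
          gcongr
          exacts [hVnonneg _ _, (hsandwich _ _).2]
      _ = μ ^ M * exp θ * α₂ ‖x₀‖ * exp (-(lam₀ - θ) * t) := by
          rw [show -(lam₀ - θ) * t = θ * t + -lam₀ * t by ring, exp_add]; ring
  · simpa using ((tendsto_exp_atBot.comp
      (tendsto_id.const_mul_atTop_of_neg (by linarith : -(lam₀ - θ) < 0))).const_mul
      (μ ^ M * exp θ * α₂ ‖x₀‖))

/-- Main theorem (convergence part of GAS a.s.): under the multiple Lyapunov function
conditions (i)-(iii), the pmf tail bound (iv) on the switch count, and the slow
switching condition (v) `μ < (λ₀+λ̃)/λ̄`, the trajectory of the randomly switched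
system converges to `0` almost surely. -/
theorem randomly_switched_as_convergence
    {n : ℕ} {P : Type*} [Finite P]
    {Ω : Type*} [MeasurableSpace Ω] (ℙ : Measure Ω) [IsProbabilityMeasure ℙ]
    (f : P → EuclideanSpace ℝ (Fin n) → EuclideanSpace ℝ (Fin n))
    (hf : ∀ p, LocallyLipschitz (f p)) (hf0 : ∀ p, f p 0 = 0)
    (V : P → EuclideanSpace ℝ (Fin n) → ℝ)
    (hVC1 : ∀ p, ContDiff ℝ 1 (V p))
    (α₁ α₂ : ℝ → ℝ)
    (hα₁cont : Continuous α₁) (hα₁mono : StrictMonoOn α₁ (Set.Ici 0))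
    (hα₁0 : α₁ 0 = 0) (hα₁inf : Filter.Tendsto α₁ Filter.atTop Filter.atTop)
    (hα₂cont : Continuous α₂) (hα₂mono : StrictMonoOn α₂ (Set.Ici 0))
    (hα₂0 : α₂ 0 = 0) (hα₂inf : Filter.Tendsto α₂ Filter.atTop Filter.atTop)
    (lam₀ lamTilde lamBar μ : ℝ) (M : ℕ)
    (hlam : 0 < lam₀) (hlt : 0 < lamTilde) (hlb : 0 < lamBar) (hμ : 1 < μ)
    -- (i) class-K∞ sandwich
    (hsandwich : ∀ p y, α₁ ‖y‖ ≤ V p y ∧ V p y ≤ α₂ ‖y‖)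
    -- (ii) decay of each subsystem
    (hdecay : ∀ p y, fderiv ℝ (V p) y (f p y) ≤ -lam₀ * V p y)
    -- (iii) ratio bound
    (hratio : ∀ p₁ p₂ y, V p₁ y ≤ μ * V p₂ y)
    -- the randomly switched system and its sample-path structure
    (σ : Ω → ℝ → P) (X : Ω → ℝ → EuclideanSpace ℝ (Fin n)) (N : Ω → ℝ → ℕ)
    (τ : Ω → ℕ → ℝ) (x₀ : EuclideanSpace ℝ (Fin n))
    (hτ0 : ∀ ω, τ ω 0 = 0) (hτmono : ∀ ω, StrictMono (τ ω))
    (hτdiv : ∀ ω, Filter.Tendsto (τ ω) Filter.atTop Filter.atTop)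
    (hσ : ∀ ω, ∀ i : ℕ, ∀ t ∈ Set.Ico (τ ω i) (τ ω (i + 1)), σ ω t = σ ω (τ ω i))
    (hN : ∀ ω, ∀ t : ℝ, 0 ≤ t → τ ω (N ω t) ≤ t ∧ t < τ ω (N ω t + 1))
    (hx0 : ∀ ω, X ω 0 = x₀) (hxcont : ∀ ω, Continuous (X ω))
    (hsol : ∀ ω, ∀ t : ℝ, 0 ≤ t → t ∉ Set.range (τ ω) →
      HasDerivAt (X ω) (f (σ ω t) (X ω t)) t)
    (hNmeas : ∀ t : ℝ, Measurable (fun ω => N ω t))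
    (hVmeas : ∀ t : ℝ, Measurable (fun ω => V (σ ω t) (X ω t)))
    -- (iv) pmf tail bound on the switch count
    (hpmf : ∀ t : ℝ, 0 ≤ t → ∀ k : ℕ, M ≤ k →
      ℙ {ω | N ω t = k} ≤
        ENNReal.ofReal (Real.exp (-lamTilde * t) * (lamBar * t) ^ k / (Nat.factorial k)))
    -- (v) slow switching
    (hslow : μ < (lam₀ + lamTilde) / lamBar) :
    ∀ᵐ ω ∂ℙ, Filter.Tendsto (fun t => X ω t) Filter.atTop (nhds 0) :=
  randomly_switched_as_convergence_general ℙ f V hVC1 α₁ α₂ hα₁mono hα₁0 lam₀ lamTilde lamBar μ M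
    hlam hlb hμ hsandwich hdecay hratio σ X N τ x₀ hτ0 hτmono hσ hN hx0 hxcont hsol hpmf hslow
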